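/- arXiv:2501.02010 — 4 statements merged into one kernel-verified Lean document; each statement's English description precedes it below -/
import Mathlib

section
/- Let 𝓕 be the SparXnet function class with parameters d, K, χ, L, Γ and K ≤ d. Let ℓ : ℝ × ℝ → ℝ be a loss function with 0 ≤ ℓ ≤ B that is ℒ-Lipschitz in its first argument. Let (x¹,y¹),…,(x^N,y^N) be N i.i.d. samples from a distribution on ℝ^d × ℝ such that ‖x‖_∞ ≤ χ almost surely. Let f̂ ∈ 𝓕 be a minimizer of the empirical risk (1/N)∑_{i=1}^N ℓ(f(x^i), y^i) over 𝓕 and let f* ∈ 𝓕 be a minimizer of the population risk E ℓ(f(x), y) over 𝓕 (both assumed to exist). Then for every δ ∈ (0,1), with probability at least 1 − δ over the draw of the training set, (1/N)∑_{i=1}^N ℓ(f̂(x^i), y^i) − E ℓ(f*(x), y) ≤ (24ℒ/√N)·(15χLΓ√K + 3)·√(log₂(12dN²(χLΓ + 1)))·log(N) + 6B√(log(2/δ)/(2N)). -/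
open MeasureTheory

/-- The SparXnet function class on `ℝ^d` with `K` pathways: functions of the form
`F(x) = ∑ₖ θₖ fₖ(∑ᵤ Wᵏᵤ xᵤ)` where each `Wᵏ` has positive entries summing to at most 1,
each `fₖ` is `L`-Lipschitz with `|fₖ| ≤ χL` on `[−χ, χ]`, and `∑ₖ |θₖ| ≤ Γ`. -/
def SparXnet (d K : ℕ) (χ L Γ : ℝ) : Set ((Fin d → ℝ) → ℝ) :=
  {F | ∃ (θ : Fin K → ℝ) (W : Fin K → Fin d → ℝ) (f : Fin K → ℝ → ℝ),
    (∀ k u, 0 < W k u) ∧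
    (∀ k, (∑ u, W k u) ≤ 1) ∧
    (∀ k, ∀ s t : ℝ, |f k s - f k t| ≤ L * |s - t|) ∧
    (∀ k, ∀ t : ℝ, |t| ≤ χ → |f k t| ≤ χ * L) ∧
    (∑ k, |θ k|) ≤ Γ ∧
    ∀ x : Fin d → ℝ, F x = ∑ k, θ k * f k (∑ u, W k u * x u)}

/-!
Since `fhat S` minimizes the empirical risk, its empirical risk is at most that of `fstar`, a
single function fixed before the sample is drawn. Hoeffding's inequality for the loss of `fstar`,
which lies in `[0, B]`, therefore bounds the excess by `B √(log (1/δ) / (2N))` with probability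
at least `1 - δ`; this is dominated by the second term, and the complexity term is nonnegative.
-/

open ProbabilityTheory Real Set

section Hoeffding

variable {α : Type*} [MeasurableSpace α] {μ : Measure α} [IsProbabilityMeasure μ] {g : α → ℝ}
  {a b : ℝ}

lemma measureReal_sum_sub_integral_ge_le (hg : AEMeasurable g μ)
    (hab : ∀ᵐ x ∂μ, g x ∈ Icc a b) (N : ℕ) {ε : ℝ} (hε : 0 ≤ ε) :
    (Measure.pi fun _ : Fin N => μ).real {S | ε ≤ ∑ i, (g (S i) - ∫ x, g x ∂μ)} ≤
      exp (-2 * ε ^ 2 / (N * (b - a) ^ 2)) := by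
  have hsubG : ∀ i, HasSubgaussianMGF (fun S : Fin N → α => g (S i) - ∫ x, g x ∂μ)
      ((‖b - a‖₊ / 2) ^ 2) (Measure.pi fun _ => μ) := by
    intro i
    have hqmp := (measurePreserving_eval (fun _ : Fin N => μ) i).quasiMeasurePreserving
    have := hasSubgaussianMGF_of_mem_Icc (X := fun S : Fin N → α => g (S i))
      (hg.comp_quasiMeasurePreserving hqmp) (hqmp.ae hab)
    rwa [integral_comp_eval (μ := fun _ => μ) hg.aestronglyMeasurable] at this
  have hindep : iIndepFun (fun i (S : Fin N → α) => g (S i) - ∫ x, g x ∂μ)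
      (Measure.pi fun _ => μ) :=
    iIndepFun_pi (X := fun _ x => g x - ∫ x, g x ∂μ) fun _ => hg.sub_const _
  refine (HasSubgaussianMGF.measure_sum_ge_le_of_iIndepFun hindep (fun i _ => hsubG i)
    hε).trans_eq ?_
  congr 1
  simp only [Finset.sum_const, Finset.card_univ, Fintype.card_fin, nsmul_eq_mul, NNReal.coe_mul,
    NNReal.coe_natCast, NNReal.coe_pow, NNReal.coe_div, coe_nnnorm, Real.norm_eq_abs,
    NNReal.coe_ofNat, div_pow, sq_abs]
  rw [show (2 : ℝ) * (N * ((b - a) ^ 2 / 2 ^ 2)) = N * (b - a) ^ 2 / 2 by ring,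
    div_div_eq_mul_div]
  ring

lemma ae_sum_sub_integral_eq_zero_of_mem_Icc_self (hab : ∀ᵐ x ∂μ, g x ∈ Icc a a) (N : ℕ) :
    ∀ᵐ S ∂(Measure.pi fun _ : Fin N => μ), ∑ i, (g (S i) - ∫ x, g x ∂μ) = 0 := by
  have hga : ∀ᵐ x ∂μ, g x = a := hab.mono fun x hx => le_antisymm hx.2 hx.1
  have hcentered : ∀ᵐ x ∂μ, g x - ∫ y, g y ∂μ = 0 := by
    filter_upwards [hga] with x hx
    simp [hx, integral_congr_ae hga]
  have hcoord : ∀ i, ∀ᵐ S ∂(Measure.pi fun _ : Fin N => μ), g (S i) - ∫ y, g y ∂μ = 0 :=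
    fun i => (measurePreserving_eval (fun _ : Fin N => μ) i).quasiMeasurePreserving.ae hcentered
  filter_upwards [ae_all_iff.2 hcoord] with S hS
  simp [hS]

lemma measure_sum_sub_integral_gt_le (hg : AEMeasurable g μ) (hab : ∀ᵐ x ∂μ, g x ∈ Icc a b)
    {N : ℕ} (hN : 0 < N) {δ : ℝ} (hδ0 : 0 < δ) (hδ1 : δ ≤ 1) :
    (Measure.pi fun _ : Fin N => μ)
        {S | N * ((b - a) * √(log (1 / δ) / (2 * N))) < ∑ i, (g (S i) - ∫ x, g x ∂μ)} ≤
      ENNReal.ofReal δ := by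
  obtain ⟨x, hx⟩ := hab.exists
  rcases (hx.1.trans hx.2).eq_or_lt with rfl | hlt
  · rw [measure_eq_zero_iff_ae_notMem.2]
    · exact zero_le
    filter_upwards [ae_sum_sub_integral_eq_zero_of_mem_Icc_self hab N] with S hS
    simp [hS]
  set t := (b - a) * √(log (1 / δ) / (2 * N))
  have hlog : 0 ≤ log (1 / δ) / (2 * N) :=
    div_nonneg (log_nonneg (one_le_one_div hδ0 hδ1)) (by positivity)
  have hexp : exp (-2 * (N * t) ^ 2 / (N * (b - a) ^ 2)) = δ := by
    have hN' : (N : ℝ) ≠ 0 := by positivity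
    have hba : b - a ≠ 0 := (sub_pos.2 hlt).ne'
    rw [show -2 * (N * t) ^ 2 / (N * (b - a) ^ 2) = -log (1 / δ) by
      rw [mul_pow, mul_pow, sq_sqrt hlog]; field_simp]
    rw [exp_neg, exp_log (by positivity), one_div, inv_inv]
  have hhoeffding := measureReal_sum_sub_integral_ge_le hg hab N (ε := N * t)
    (mul_nonneg N.cast_nonneg (mul_nonneg (sub_pos.2 hlt).le (sqrt_nonneg _)))
  rw [hexp] at hhoeffding
  exact (measure_mono fun S (hS : N * t < _) => show N * t ≤ _ from hS.le).trans
    ((ENNReal.le_ofReal_iff_toReal_le (measure_ne_top _ _) hδ0.le).2 hhoeffding)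

lemma one_sub_ofReal_le_measure_mean_le_integral_add (hg : AEMeasurable g μ)
    (hab : ∀ᵐ x ∂μ, g x ∈ Icc a b) {N : ℕ} (hN : 0 < N) {δ : ℝ} (hδ0 : 0 < δ) (hδ1 : δ ≤ 1) :
    1 - ENNReal.ofReal δ ≤ (Measure.pi fun _ : Fin N => μ)
      {S | (∑ i, g (S i)) / N ≤ (∫ x, g x ∂μ) + (b - a) * √(log (1 / δ) / (2 * N))} := by
  set P := Measure.pi fun _ : Fin N => μ
  set t := (b - a) * √(log (1 / δ) / (2 * N))
  set bad := {S : Fin N → α | N * t < ∑ i, (g (S i) - ∫ x, g x ∂μ)}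
  have hbad : P bad ≤ ENNReal.ofReal δ := measure_sum_sub_integral_gt_le hg hab hN hδ0 hδ1
  have hcover : univ ⊆ {S | (∑ i, g (S i)) / N ≤ (∫ x, g x ∂μ) + t} ∪ bad := by
    intro S _
    by_contra hS
    simp only [mem_union, mem_ofPred_eq, not_or, not_le, bad, Finset.sum_sub_distrib,
      Finset.sum_const, Finset.card_univ, Fintype.card_fin, nsmul_eq_mul] at hS
    rw [lt_div_iff₀ (by exact_mod_cast hN)] at hS
    linarith [hS.1, hS.2]
  calc 1 - ENNReal.ofReal δ ≤ P univ - P bad := by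
        rw [measure_univ]; exact tsub_le_tsub_left hbad 1
    _ ≤ _ := by
        rw [tsub_le_iff_right]
        exact (measure_mono hcover).trans (measure_union_le _ _)

end Hoeffding

lemma continuous_of_mem_sparXnet {d K : ℕ} {χ L Γ : ℝ} {F : (Fin d → ℝ) → ℝ}
    (hF : F ∈ SparXnet d K χ L Γ) : Continuous F := by
  obtain ⟨θ, W, f, -, -, hf, -, -, hFeq⟩ := hF
  have hfc : ∀ k, Continuous (f k) := fun k =>
    (LipschitzWith.of_dist_le_mul (K := L.toNNReal) fun s t => by
      simpa only [Real.dist_eq] using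
        (hf k s t).trans (mul_le_mul_of_nonneg_right (le_coe_toNNReal L) (abs_nonneg _))).continuous
  rw [funext hFeq]
  fun_prop

theorem sparxnet_generalization_general
    (d K N : ℕ) (hN : 0 < N)
    (χ L Γ B 𝓛 : ℝ) (hχ : 0 < χ) (hL : 0 < L) (hΓ : 0 < Γ)
    (ℓ : ℝ → ℝ → ℝ)
    (hℓmeas : Measurable (Function.uncurry ℓ))
    (hℓ0 : ∀ s t : ℝ, 0 ≤ ℓ s t) (hℓB : ∀ s t : ℝ, ℓ s t ≤ B)
    (hℓlip : ∀ s s' t : ℝ, |ℓ s t - ℓ s' t| ≤ 𝓛 * |s - s'|)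
    (μ : Measure ((Fin d → ℝ) × ℝ)) [IsProbabilityMeasure μ]
    -- `fhat S` is an empirical risk minimizer over the SparXnet class for the sample `S`
    (fhat : (Fin N → (Fin d → ℝ) × ℝ) → ((Fin d → ℝ) → ℝ))
    (hfhat_min : ∀ S, ∀ F ∈ SparXnet d K χ L Γ,
      (1 / N : ℝ) * ∑ i, ℓ (fhat S (S i).1) (S i).2 ≤
        (1 / N : ℝ) * ∑ i, ℓ (F (S i).1) (S i).2)
    -- `fstar` is a population risk minimizer over the SparXnet class
    (fstar : (Fin d → ℝ) → ℝ)
    (hfstar_mem : fstar ∈ SparXnet d K χ L Γ)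
    (δ : ℝ) (hδ : δ ∈ Set.Ioo (0 : ℝ) 1) :
    1 - ENNReal.ofReal δ ≤
      (Measure.pi fun _ : Fin N => μ)
        {S : Fin N → (Fin d → ℝ) × ℝ |
          (1 / N : ℝ) * (∑ i, ℓ (fhat S (S i).1) (S i).2) -
              (∫ p, ℓ (fstar p.1) p.2 ∂μ) ≤
            24 * 𝓛 / Real.sqrt N * (15 * χ * L * Γ * Real.sqrt K + 3) *
                Real.sqrt (Real.logb 2 (12 * d * N ^ 2 * (χ * L * Γ + 1))) * Real.log N +
              6 * B * Real.sqrt (Real.log (2 / δ) / (2 * N))} := by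
  obtain ⟨hδ0, hδ1⟩ := hδ
  have hB : 0 ≤ B := (hℓ0 0 0).trans (hℓB 0 0)
  have h𝓛 : 0 ≤ 𝓛 := by simpa using (abs_nonneg _).trans (hℓlip 1 0 0)
  have hloss : Measurable fun p : (Fin d → ℝ) × ℝ => ℓ (fstar p.1) p.2 :=
    hℓmeas.comp (((continuous_of_mem_sparXnet hfstar_mem).measurable.comp measurable_fst).prodMk
      measurable_snd)
  refine (one_sub_ofReal_le_measure_mean_le_integral_add hloss.aemeasurable
    (ae_of_all _ fun p => ⟨hℓ0 _ _, hℓB _ _⟩) hN hδ0 hδ1.le).trans (measure_mono fun S hS => ?_)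
  have herm := hfhat_min S fstar hfstar_mem
  have hdev : (B - 0) * √(log (1 / δ) / (2 * N)) ≤ 6 * B * √(log (2 / δ) / (2 * N)) := by
    have hlog : √(log (1 / δ) / (2 * N)) ≤ √(log (2 / δ) / (2 * N)) := by
      gcongr
      norm_num
    nlinarith [sqrt_nonneg (log (2 / δ) / (2 * N))]
  have hcomplexity : 0 ≤ 24 * 𝓛 / √N * (15 * χ * L * Γ * √K + 3) *
      √(logb 2 (12 * d * N ^ 2 * (χ * L * Γ + 1))) * log N := by
    positivity
  simp only [mem_ofPred_eq, one_div_mul_eq_div] at hS herm ⊢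
  linarith

/-- main generalization theorem for SparXnet: if `fhat` maps each training set
to an empirical risk minimizer over the SparXnet class and `fstar` is a population risk
minimizer, then with probability at least `1 − δ` over the draw of `N` i.i.d. samples,
the empirical risk of `fhat` exceeds the population risk of `fstar` by at most
`(24ℒ/√N)(15χLΓ√K + 3)·√(log₂(12dN²(χLΓ + 1)))·log N + 6B√(log(2/δ)/(2N))`. -/
theorem sparxnet_generalization
    (d K N : ℕ) (hKd : K ≤ d) (hN : 0 < N)
    (χ L Γ B 𝓛 : ℝ) (hχ : 0 < χ) (hL : 0 < L) (hΓ : 0 < Γ)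
    (ℓ : ℝ → ℝ → ℝ)
    (hℓmeas : Measurable (Function.uncurry ℓ))
    (hℓ0 : ∀ s t : ℝ, 0 ≤ ℓ s t) (hℓB : ∀ s t : ℝ, ℓ s t ≤ B)
    (hℓlip : ∀ s s' t : ℝ, |ℓ s t - ℓ s' t| ≤ 𝓛 * |s - s'|)
    (μ : Measure ((Fin d → ℝ) × ℝ)) [IsProbabilityMeasure μ]
    (hsupp : ∀ᵐ p ∂μ, ∀ u, |p.1 u| ≤ χ)
    -- `fhat S` is an empirical risk minimizer over the SparXnet class for the sample `S`
    (fhat : (Fin N → (Fin d → ℝ) × ℝ) → ((Fin d → ℝ) → ℝ))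
    (hfhat_mem : ∀ S, fhat S ∈ SparXnet d K χ L Γ)
    (hfhat_min : ∀ S, ∀ F ∈ SparXnet d K χ L Γ,
      (1 / N : ℝ) * ∑ i, ℓ (fhat S (S i).1) (S i).2 ≤
        (1 / N : ℝ) * ∑ i, ℓ (F (S i).1) (S i).2)
    -- `fstar` is a population risk minimizer over the SparXnet class
    (fstar : (Fin d → ℝ) → ℝ)
    (hfstar_mem : fstar ∈ SparXnet d K χ L Γ)
    (hfstar_min : ∀ F ∈ SparXnet d K χ L Γ,
      (∫ p, ℓ (fstar p.1) p.2 ∂μ) ≤ ∫ p, ℓ (F p.1) p.2 ∂μ)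
    (δ : ℝ) (hδ : δ ∈ Set.Ioo (0 : ℝ) 1) :
    1 - ENNReal.ofReal δ ≤
      (Measure.pi fun _ : Fin N => μ)
        {S : Fin N → (Fin d → ℝ) × ℝ |
          (1 / N : ℝ) * (∑ i, ℓ (fhat S (S i).1) (S i).2) -
              (∫ p, ℓ (fstar p.1) p.2 ∂μ) ≤
            24 * 𝓛 / Real.sqrt N * (15 * χ * L * Γ * Real.sqrt K + 3) *
                Real.sqrt (Real.logb 2 (12 * d * N ^ 2 * (χ * L * Γ + 1))) * Real.log N +
              6 * B * Real.sqrt (Real.log (2 / δ) / (2 * N))} :=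
  sparxnet_generalization_general d K N hN χ L Γ B 𝓛 hχ hL hΓ ℓ hℓmeas hℓ0 hℓB hℓlip μ fhat
    hfhat_min fstar hfstar_mem δ hδ
end

section
/- Let d ∈ ℕ and β, ε > 0, and let B_β = {x ∈ ℝ^d : ‖x‖₁ ≤ β} denote the ball of radius β in ℝ^d with respect to the L¹ norm. Then the covering number of B_β at scale ε with respect to the Euclidean (L²) norm satisfies log N(B_β, ε, ‖·‖₂) ≤ ⌈β²/ε²⌉ · log(2d). -/
/-!
Maurey's empirical method, derandomised greedily. The ℓ¹-ball of radius `β` is the convex hull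
of the `2d` points `±β eᵢ`, so each `x` in it is the mean of a probability distribution `p` on
them. For any `D`, the `p`-average of `‖D + (a - x)‖²` is `‖D‖²` plus the variance of `p`, which is
at most `β²`; hence vertices `a₁, …, aₖ` can be chosen one at a time with
`‖∑ⱼ (aⱼ - x)‖² ≤ k β²`, i.e. `x` lies within `β / √k ≤ ε` of the average of some `k`-tuple of
vertices. These averages form a cover with at most `(2d)ᵏ` points.
-/

open Finset

section Maurey

variable {E : Type*} [NormedAddCommGroup E] [InnerProductSpace ℝ E] {σ : Type*} [Fintype σ]
  {p : σ → ℝ} {a : σ → E}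

lemma sum_mul_norm_sub_sq_eq (hp : ∑ s, p s = 1) (y : E) :
    ∑ s, p s * ‖a s - y‖ ^ 2 =
      ∑ s, p s * ‖a s - ∑ s', p s' • a s'‖ ^ 2 + ‖∑ s, p s • a s - y‖ ^ 2 := by
  set x := ∑ s, p s • a s
  have h_mean : ∑ s, p s • (a s - x) = 0 := by
    simp only [smul_sub, sum_sub_distrib, ← sum_smul, hp, one_smul, x, sub_self]
  have h_cross : ∑ s, p s * inner ℝ (a s - x) (x - y) = 0 := by
    simp only [← real_inner_smul_left, ← sum_inner, h_mean, inner_zero_left]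
  calc ∑ s, p s * ‖a s - y‖ ^ 2
      = ∑ s, (p s * ‖a s - x‖ ^ 2 + 2 * (p s * inner ℝ (a s - x) (x - y)) +
          p s * ‖x - y‖ ^ 2) := by
        refine sum_congr rfl fun s _ => ?_
        rw [← sub_add_sub_cancel (a s) x y, norm_add_sq_real]
        ring
    _ = ∑ s, p s * ‖a s - x‖ ^ 2 + ‖x - y‖ ^ 2 := by
        rw [sum_add_distrib, sum_add_distrib, ← mul_sum, h_cross, ← sum_mul, hp]
        ring

lemma exists_le_of_sum_mul_le {f : σ → ℝ} {c : ℝ} (hp₀ : ∀ s, 0 ≤ p s)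
    (hp₁ : ∑ s, p s = 1) (h : ∑ s, p s * f s ≤ c) : ∃ s, f s ≤ c := by
  have : Nonempty σ := by
    by_contra hσ
    simp [not_nonempty_iff.mp hσ] at hp₁
  obtain ⟨s₀, hs₀⟩ := Finite.exists_min f
  refine ⟨s₀, le_trans ?_ h⟩
  calc f s₀ = ∑ s, p s * f s₀ := by rw [← sum_mul, hp₁, one_mul]
    _ ≤ ∑ s, p s * f s := sum_le_sum fun s _ => mul_le_mul_of_nonneg_left (hs₀ s) (hp₀ s)

variable {R : ℝ}

lemma exists_norm_sum_sub_sq_le (hp₀ : ∀ s, 0 ≤ p s) (hp₁ : ∑ s, p s = 1)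
    (hR : ∀ s, ‖a s‖ ≤ R) (k : ℕ) :
    ∃ t : Fin k → σ, ‖∑ j, (a (t j) - ∑ s, p s • a s)‖ ^ 2 ≤ k * R ^ 2 := by
  set x := ∑ s, p s • a s
  have h_var : ∑ s, p s * ‖a s - x‖ ^ 2 ≤ R ^ 2 := by
    have h := sum_mul_norm_sub_sq_eq (a := a) hp₁ 0
    simp only [sub_zero] at h
    calc ∑ s, p s * ‖a s - x‖ ^ 2 ≤ ∑ s, p s * ‖a s‖ ^ 2 := by
          rw [h]; exact le_add_of_nonneg_right (sq_nonneg _)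
      _ ≤ ∑ s, p s * R ^ 2 := sum_le_sum fun s _ =>
          mul_le_mul_of_nonneg_left (pow_le_pow_left₀ (norm_nonneg _) (hR s) 2) (hp₀ s)
      _ = R ^ 2 := by rw [← sum_mul, hp₁, one_mul]
  induction k with
  | zero => simp
  | succ k ih =>
    obtain ⟨t, ht⟩ := ih
    set D := ∑ j, (a (t j) - x)
    obtain ⟨s, hs⟩ : ∃ s, ‖a s - (x - D)‖ ^ 2 ≤ k * R ^ 2 + R ^ 2 := by
      refine exists_le_of_sum_mul_le hp₀ hp₁ ?_
      rw [sum_mul_norm_sub_sq_eq hp₁, sub_sub_cancel]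
      linarith
    refine ⟨Fin.cons s t, ?_⟩
    simp only [Fin.sum_univ_succ, Fin.cons_zero, Fin.cons_succ]
    rwa [Nat.cast_succ, add_one_mul, sub_add]

lemma exists_norm_sub_inv_smul_sum_sq_le (hp₀ : ∀ s, 0 ≤ p s) (hp₁ : ∑ s, p s = 1)
    (hR : ∀ s, ‖a s‖ ≤ R) {k : ℕ} (hk : 0 < k) :
    ∃ t : Fin k → σ, ‖∑ s, p s • a s - (k : ℝ)⁻¹ • ∑ j, a (t j)‖ ^ 2 ≤ R ^ 2 / k := by
  obtain ⟨t, ht⟩ := exists_norm_sum_sub_sq_le hp₀ hp₁ hR k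
  refine ⟨t, ?_⟩
  have hk' : (k : ℝ) ≠ 0 := by positivity
  have h_eq : ∑ s, p s • a s - (k : ℝ)⁻¹ • ∑ j, a (t j) =
      -((k : ℝ)⁻¹ • ∑ j, (a (t j) - ∑ s, p s • a s)) := by
    rw [sum_sub_distrib, sum_const, card_univ, Fintype.card_fin, ← Nat.cast_smul_eq_nsmul ℝ,
      smul_sub, smul_smul, inv_mul_cancel₀ hk', one_smul, neg_sub]
  rw [h_eq, norm_neg, norm_smul, norm_inv, Real.norm_natCast, mul_pow, inv_pow]
  calc ((k : ℝ) ^ 2)⁻¹ * ‖∑ j, (a (t j) - ∑ s, p s • a s)‖ ^ 2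
      ≤ ((k : ℝ) ^ 2)⁻¹ * (k * R ^ 2) := by gcongr
    _ = R ^ 2 / k := by field_simp

theorem exists_finset_card_le_pow_approx_sum_smul (hR : ∀ s, ‖a s‖ ≤ R) {k : ℕ} (hk : 0 < k) :
    ∃ C : Finset E, C.card ≤ Fintype.card σ ^ k ∧
      ∀ p : σ → ℝ, (∀ s, 0 ≤ p s) → ∑ s, p s = 1 →
        ∃ c ∈ C, ‖∑ s, p s • a s - c‖ ^ 2 ≤ R ^ 2 / k := by
  classical
  refine ⟨univ.image fun t : Fin k → σ => (k : ℝ)⁻¹ • ∑ j, a (t j), ?_, fun p hp₀ hp₁ => ?_⟩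
  · exact card_image_le.trans (by simp)
  · obtain ⟨t, ht⟩ := exists_norm_sub_inv_smul_sum_sq_le hp₀ hp₁ hR hk
    exact ⟨_, mem_image_of_mem _ (mem_univ t), ht⟩

end Maurey

lemma Real.log_natCast_le_log_natCast {m n : ℕ} (h : m ≤ n) : Real.log m ≤ Real.log n := by
  rcases Nat.eq_zero_or_pos m with rfl | hm
  · simpa using Real.log_natCast_nonneg n
  · exact Real.log_le_log (by exact_mod_cast hm) (by exact_mod_cast h)

def signedBasis (d : ℕ) (β : ℝ) (s : Fin d × Bool) : EuclideanSpace ℝ (Fin d) :=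
  PiLp.single 2 s.1 (if s.2 then β else -β)

lemma norm_signedBasis {d : ℕ} {β : ℝ} (hβ : 0 ≤ β) (s : Fin d × Bool) :
    ‖signedBasis d β s‖ = β := by
  obtain ⟨i, _ | _⟩ := s <;> simp [signedBasis, PiLp.norm_single, abs_of_nonneg hβ]

lemma exists_sum_smul_signedBasis_eq {d : ℕ} {β : ℝ} (hd : 0 < d) (hβ : 0 < β)
    {x : Fin d → ℝ} (hx : ∑ i, |x i| ≤ β) :
    ∃ p : Fin d × Bool → ℝ, (∀ s, 0 ≤ p s) ∧ ∑ s, p s = 1 ∧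
      ∑ s, p s • signedBasis d β s = WithLp.toLp 2 x := by
  -- Split each coordinate into its positive and negative parts, and spread the slack
  -- `β - ‖x‖₁` evenly over all `2d` vertices, where it cancels in pairs `±β eᵢ`.
  set r := (β - ∑ i, |x i|) / (2 * d)
  refine ⟨fun s => ((if s.2 then (x s.1)⁺ else (x s.1)⁻) + r) / β, ?_, ?_, ?_⟩
  · rintro ⟨i, b⟩
    cases b <;> simp only [if_true, Bool.false_eq_true, if_false] <;> positivity
  · have h_pair : ∀ i, ((x i)⁺ + r) / β + ((x i)⁻ + r) / β = (|x i| + 2 * r) / β := by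
      intro i
      rw [← posPart_add_negPart]
      ring
    simp only [Fintype.sum_prod_type, Fintype.sum_bool, if_true, Bool.false_eq_true, if_false]
    rw [sum_congr rfl fun i _ => h_pair i, ← sum_div, sum_add_distrib, sum_const, card_univ,
      Fintype.card_fin, nsmul_eq_mul, div_eq_one_iff_eq hβ.ne']
    simp only [r]
    field_simp
    ring
  · have h_pair : ∀ i j : Fin d, ((x i)⁺ + r) / β * (Pi.single i β : Fin d → ℝ) j +
        ((x i)⁻ + r) / β * (Pi.single i (-β) : Fin d → ℝ) j =
          (Pi.single i (x i) : Fin d → ℝ) j := by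
      intro i j
      rcases eq_or_ne j i with rfl | hji
      · simp only [Pi.single_eq_same]
        field_simp
        linear_combination posPart_sub_negPart (x j)
      · simp [hji]
    ext j
    simp [signedBasis, Fintype.sum_prod_type, h_pair]

/-- The `L¹`-ball of radius `β` in `ℝ^d` admits an `ε`-cover in the Euclidean
norm whose log-cardinality is at most `⌈β²/ε²⌉ · log(2d)`. -/
theorem covering_l1_ball_in_l2
    (d : ℕ) (β ε : ℝ) (hβ : 0 < β) (hε : 0 < ε) :
    ∃ 𝓒 : Finset (Fin d → ℝ),
      Real.log (𝓒.card) ≤ (⌈β ^ 2 / ε ^ 2⌉₊ : ℝ) * Real.log (2 * d) ∧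
      ∀ x : Fin d → ℝ, (∑ i, |x i|) ≤ β →
        ∃ c ∈ 𝓒, Real.sqrt (∑ i, (x i - c i) ^ 2) ≤ ε := by
  classical
  rcases Nat.eq_zero_or_pos d with rfl | hd
  · exact ⟨{0}, by simp, fun x _ => ⟨0, mem_singleton_self _, by simpa using hε.le⟩⟩
  set k := ⌈β ^ 2 / ε ^ 2⌉₊
  have hk : 0 < k := Nat.ceil_pos.mpr (by positivity)
  have h_rate : β ^ 2 / k ≤ ε ^ 2 := by
    rw [div_le_iff₀ (by positivity), mul_comm, ← div_le_iff₀ (by positivity)]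
    exact Nat.le_ceil _
  obtain ⟨C, hC_card, hC⟩ := exists_finset_card_le_pow_approx_sum_smul
    (fun s => (norm_signedBasis hβ.le s).le) hk
  refine ⟨C.image WithLp.ofLp, ?_, fun x hx => ?_⟩
  · have h_card : (C.image WithLp.ofLp).card ≤ (2 * d) ^ k :=
      card_image_le.trans (hC_card.trans_eq (by simp [mul_comm]))
    calc Real.log (C.image WithLp.ofLp).card ≤ Real.log ((2 * d) ^ k : ℕ) :=
          Real.log_natCast_le_log_natCast h_card
      _ = k * Real.log (2 * d) := by push_cast; rw [Real.log_pow]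
  · obtain ⟨p, hp₀, hp₁, hp⟩ := exists_sum_smul_signedBasis_eq hd hβ hx
    obtain ⟨c, hcC, hc⟩ := hC p hp₀ hp₁
    refine ⟨c.ofLp, mem_image_of_mem _ hcC, ?_⟩
    rw [hp] at hc
    have h_dist : ‖WithLp.toLp 2 x - c‖ = Real.sqrt (∑ i, (x i - c i) ^ 2) := by
      simp [← dist_eq_norm, EuclideanSpace.dist_eq, Real.dist_eq, sq_abs]
    rw [← h_dist]
    exact (pow_le_pow_iff_left₀ (norm_nonneg _) hε.le two_ne_zero).mp (hc.trans h_rate)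
end

section
/- Let N, d ∈ ℕ and a, b > 0. Let X ∈ ℝ^{N×d} be a matrix whose rows satisfy ‖X_{i,·}‖₂ ≤ b for all i = 1, …, N, and define U_{a,b}(X) = {Xα : α ∈ ℝ^d, ‖α‖₂ ≤ a} ⊆ ℝ^N. Then for every ε > 0, the covering number of U_{a,b}(X) at scale ε with respect to the maximum norm on ℝ^N satisfies log₂ N(U_{a,b}(X), ε, ‖·‖_∞) ≤ (36 a² b² / ε²) · log₂(8abN/ε + 6N + 1). -/
open Finset

/-- Greedy Maurey-type approximation: there is a set `C` of at most `(2N+1)^K` coefficient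
vectors (sums of at most `K` terms of the form `±(ε/B) • X i`) such that any `r` with
`‖r‖² ≤ K ε²/B` has all inner products `⟨X i, r - w⟩` bounded by `ε` for some `w ∈ C`. -/
theorem maurey_greedy {N d : ℕ} (X : Fin N → Fin d → ℝ) (ε B : ℝ) (hε : 0 < ε) (hB : 0 < B)
    (hX : ∀ i, (∑ j, X i j ^ 2) ≤ B) :
    ∀ K : ℕ, ∃ C : Finset (Fin d → ℝ), (0 : Fin d → ℝ) ∈ C ∧ C.card ≤ (2 * N + 1) ^ K ∧
      ∀ r : Fin d → ℝ, (∑ j, r j ^ 2) ≤ K * (ε ^ 2 / B) →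
        ∃ w ∈ C, ∀ i, |∑ j, X i j * (r j - w j)| ≤ ε := by
  classical
  intro K
  induction K with
  | zero =>
    refine ⟨{0}, mem_singleton_self _, by simp, ?_⟩
    intro r hr
    refine ⟨0, mem_singleton_self _, ?_⟩
    have h2 : 0 ≤ ∑ j, r j ^ 2 := sum_nonneg fun _ _ => sq_nonneg _
    have h1 : ∑ j, r j ^ 2 ≤ 0 := by simpa using hr
    have hr0 : ∀ j ∈ univ, r j ^ 2 = 0 :=
      (sum_eq_zero_iff_of_nonneg fun _ _ => sq_nonneg _).1 (le_antisymm h1 h2)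
    have hrz : ∀ j : Fin d, r j = 0 := fun j =>
      pow_eq_zero_iff (by norm_num) |>.1 (hr0 j (mem_univ j))
    intro i
    simp only [hrz, Pi.zero_apply, sub_zero, mul_zero, Finset.sum_const_zero, abs_zero]
    exact hε.le
  | succ K ih =>
    obtain ⟨C, h0C, hcard, hcov⟩ := ih
    set η : ℝ := ε / B with hη
    set V : Finset (Fin d → ℝ) :=
      insert 0 ((univ.image fun i : Fin N => η • X i) ∪
        (univ.image fun i : Fin N => (-η) • X i)) with hV
    have hVcard : V.card ≤ 2 * N + 1 := by
      calc V.card ≤ ((univ.image fun i : Fin N => η • X i) ∪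
            (univ.image fun i : Fin N => (-η) • X i)).card + 1 := card_insert_le _ _
        _ ≤ ((univ.image fun i : Fin N => η • X i).card +
            (univ.image fun i : Fin N => (-η) • X i).card) + 1 :=
            Nat.add_le_add_right (card_union_le _ _) 1
        _ ≤ (N + N) + 1 := by
            have h1 := card_image_le (s := (univ : Finset (Fin N)))
              (f := fun i : Fin N => η • X i)
            have h2 := card_image_le (s := (univ : Finset (Fin N)))
              (f := fun i : Fin N => (-η) • X i)
            simp only [card_univ, Fintype.card_fin] at h1 h2
            omega
        _ ≤ 2 * N + 1 := by omega
    refine ⟨(V ×ˢ C).image fun p => p.1 + p.2, ?_, ?_, ?_⟩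
    · exact mem_image.2 ⟨(0, 0), mem_product.2 ⟨mem_insert_self _ _, h0C⟩, add_zero 0⟩
    · calc ((V ×ˢ C).image fun p => p.1 + p.2).card ≤ (V ×ˢ C).card := card_image_le
        _ = V.card * C.card := card_product _ _
        _ ≤ (2 * N + 1) * (2 * N + 1) ^ K := Nat.mul_le_mul hVcard hcard
        _ = (2 * N + 1) ^ (K + 1) := by ring
    · intro r hr
      by_cases hterm : ∀ i, |∑ j, X i j * r j| ≤ ε
      · refine ⟨0, mem_image.2 ⟨(0, 0), mem_product.2 ⟨mem_insert_self _ _, h0C⟩, add_zero 0⟩, ?_⟩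
        intro i
        simpa using hterm i
      · push_neg at hterm
        obtain ⟨i, hi⟩ := hterm
        set t : ℝ := ∑ j, X i j * r j with ht
        set s : ℝ := if 0 ≤ t then 1 else -1 with hs
        have hst : s * t = |t| := by
          rcases le_or_gt 0 t with h | h
          · simp [hs, h, abs_of_nonneg h]
          · simp [hs, not_le.2 h, abs_of_neg h]
        have hs2 : s ^ 2 = 1 := by
          rcases le_or_gt 0 t with h | h
          · simp [hs, h]
          · simp [hs, not_le.2 h]
        set v : Fin d → ℝ := (s * η) • X i with hv
        have hvV : v ∈ V := by
          rcases le_or_gt 0 t with h | h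
          · refine mem_insert_of_mem (mem_union_left _ (mem_image.2 ⟨i, mem_univ i, ?_⟩))
            simp [hv, hs, h]
          · refine mem_insert_of_mem (mem_union_right _ (mem_image.2 ⟨i, mem_univ i, ?_⟩))
            simp [hv, hs, not_le.2 h]
        have hηpos : 0 < η := div_pos hε hB
        -- norm decrease computation
        have hsum : ∑ j, (r j - v j) ^ 2
            = (∑ j, r j ^ 2) - 2 * ((s * η) * t) + (s * η) ^ 2 * ∑ j, X i j ^ 2 := by
          have expand : ∀ j : Fin d, (r j - v j) ^ 2
              = r j ^ 2 - 2 * ((s * η) * (X i j * r j)) + (s * η) ^ 2 * X i j ^ 2 := by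
            intro j
            simp only [hv, Pi.smul_apply, smul_eq_mul]
            ring
          rw [Finset.sum_congr rfl fun j _ => expand j]
          simp only [Finset.sum_add_distrib, Finset.sum_sub_distrib, ← Finset.mul_sum, ← ht]
        have hkey : ∑ j, (r j - v j) ^ 2 ≤ K * (ε ^ 2 / B) := by
          have h1 : (s * η) * t = η * |t| := by rw [mul_comm s η, mul_assoc, hst]
          have h2 : (s * η) ^ 2 * ∑ j, X i j ^ 2 ≤ η ^ 2 * B := by
            have : (s * η) ^ 2 = η ^ 2 := by rw [mul_pow, hs2, one_mul]
            rw [this]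
            exact mul_le_mul_of_nonneg_left (hX i) (sq_nonneg η)
          have h3 : η * ε ≤ η * |t| := mul_le_mul_of_nonneg_left hi.le hηpos.le
          have hηε : η * ε = ε ^ 2 / B := by rw [hη]; ring
          have hη2B : η ^ 2 * B = ε ^ 2 / B := by
            rw [hη]; field_simp
          rw [hsum, h1]
          have hrK : (∑ j, r j ^ 2) ≤ (K + 1 : ℕ) * (ε ^ 2 / B) := hr
          push_cast at hrK
          nlinarith [h2, h3]
        obtain ⟨w', hw'C, hw'⟩ := hcov _ hkey
        refine ⟨v + w', mem_image.2 ⟨(v, w'), mem_product.2 ⟨hvV, hw'C⟩, rfl⟩, ?_⟩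
        intro i'
        have : ∀ j : Fin d, r j - (v + w') j = (r j - v j) - w' j := by
          intro j; simp [Pi.add_apply]; ring
        calc |∑ j, X i' j * (r j - (v + w') j)|
            = |∑ j, X i' j * ((r j - v j) - w' j)| := by
              rw [Finset.sum_congr rfl fun j _ => by rw [this j]]
          _ ≤ ε := hw' i'

/-- Maurey-type bound, Zhang 2002: For a matrix `X ∈ ℝ^{N×d}` with rows of
Euclidean norm at most `b`, the set `U_{a,b}(X) = {Xα : ‖α‖₂ ≤ a}` admits an `ε`-cover in the
max norm on `ℝ^N` whose log₂-cardinality is at most `(36a²b²/ε²) · log₂(8abN/ε + 6N + 1)`. -/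
theorem covering_linear_predictions_sup_norm
    (N d : ℕ) (a b ε : ℝ) (ha : 0 < a) (hb : 0 < b) (hε : 0 < ε)
    (X : Fin N → Fin d → ℝ)
    (hX : ∀ i, Real.sqrt (∑ j, X i j ^ 2) ≤ b) :
    ∃ 𝓒 : Finset (Fin N → ℝ),
      Real.logb 2 (𝓒.card) ≤
        36 * a ^ 2 * b ^ 2 / ε ^ 2 * Real.logb 2 (8 * a * b * N / ε + 6 * N + 1) ∧
      ∀ α : Fin d → ℝ, Real.sqrt (∑ j, α j ^ 2) ≤ a →
        ∃ c ∈ 𝓒, ∀ i, |(∑ j, X i j * α j) - c i| ≤ ε := by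
  classical
  have hlog_nonneg : 0 ≤ Real.logb 2 (8 * a * b * N / ε + 6 * N + 1) := by
    apply Real.logb_nonneg (by norm_num)
    have h1 : 0 ≤ 8 * a * b * N / ε := by positivity
    have h2 : 0 ≤ (6 : ℝ) * N := by positivity
    linarith
  have hX2 : ∀ i, (∑ j, X i j ^ 2) ≤ b ^ 2 := by
    intro i
    have hnn : 0 ≤ ∑ j, X i j ^ 2 := sum_nonneg fun _ _ => sq_nonneg _
    calc (∑ j, X i j ^ 2) = Real.sqrt (∑ j, X i j ^ 2) ^ 2 := (Real.sq_sqrt hnn).symm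
      _ ≤ b ^ 2 := pow_le_pow_left₀ (Real.sqrt_nonneg _) (hX i) 2
  rcases le_or_gt (a * b) ε with hcase | hcase
  · -- trivial cover by {0}
    refine ⟨{fun _ => 0}, ?_, ?_⟩
    · have : (({fun _ => 0} : Finset (Fin N → ℝ)).card : ℝ) = 1 := by simp
      rw [this, Real.logb_one]
      positivity
    · intro α hα
      refine ⟨fun _ => 0, mem_singleton_self _, ?_⟩
      intro i
      have hα2 : (∑ j, α j ^ 2) ≤ a ^ 2 := by
        have hnn : 0 ≤ ∑ j, α j ^ 2 := sum_nonneg fun _ _ => sq_nonneg _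
        calc (∑ j, α j ^ 2) = Real.sqrt (∑ j, α j ^ 2) ^ 2 := (Real.sq_sqrt hnn).symm
          _ ≤ a ^ 2 := pow_le_pow_left₀ (Real.sqrt_nonneg _) hα 2
      have hcs : (∑ j, X i j * α j) ^ 2 ≤ (∑ j, X i j ^ 2) * (∑ j, α j ^ 2) :=
        Finset.sum_mul_sq_le_sq_mul_sq Finset.univ (X i) α
      have h2 : (∑ j, X i j * α j) ^ 2 ≤ (b * a) ^ 2 := by
        calc (∑ j, X i j * α j) ^ 2 ≤ (∑ j, X i j ^ 2) * (∑ j, α j ^ 2) := hcs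
          _ ≤ b ^ 2 * a ^ 2 := mul_le_mul (hX2 i) hα2
              (sum_nonneg fun _ _ => sq_nonneg _) (by positivity)
          _ = (b * a) ^ 2 := by ring
      have h3 : |∑ j, X i j * α j| ≤ b * a := by
        rw [abs_le]
        constructor <;> nlinarith [mul_pos hb ha, h2]
      simpa using le_trans h3 (by linarith [mul_comm b a])
  · -- Maurey greedy cover
    set T : ℝ := a ^ 2 * b ^ 2 / ε ^ 2 with hT
    have hT1 : 1 < T := by
      rw [hT]
      rw [lt_div_iff₀ (by positivity)]
      nlinarith
    set K : ℕ := ⌈T⌉₊ with hK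
    have hTK : T ≤ K := Nat.le_ceil T
    have hK2T : (K : ℝ) ≤ 2 * T := by
      have h := Nat.ceil_lt_add_one (le_of_lt (lt_trans one_pos hT1))
      have : (K : ℝ) < T + 1 := h
      linarith
    obtain ⟨C, h0C, hcard, hcov⟩ := maurey_greedy X ε (b ^ 2) hε (by positivity) hX2 K
    refine ⟨C.image fun w => fun i => ∑ j, X i j * w j, ?_, ?_⟩
    · -- cardinality bound
      have hpos : (0 : ℝ) < ((C.image fun w => fun i => ∑ j, X i j * w j).card : ℝ) := by
        have : C.Nonempty := ⟨0, h0C⟩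
        have := (this.image fun w => fun i => ∑ j, X i j * w j)
        exact_mod_cast Finset.card_pos.2 this
      have hcard2 : ((C.image fun w => fun i => ∑ j, X i j * w j).card : ℝ)
          ≤ ((2 * N + 1 : ℕ) : ℝ) ^ K := by
        exact_mod_cast le_trans (Finset.card_image_le) hcard
      calc Real.logb 2 ((C.image fun w => fun i => ∑ j, X i j * w j).card : ℝ)
          ≤ Real.logb 2 (((2 * N + 1 : ℕ) : ℝ) ^ K) :=
            Real.logb_le_logb_of_le (by norm_num) hpos hcard2
        _ = K * Real.logb 2 ((2 * N + 1 : ℕ) : ℝ) := Real.logb_pow 2 _ K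
        _ ≤ (2 * T) * Real.logb 2 (8 * a * b * N / ε + 6 * N + 1) := by
            apply mul_le_mul hK2T ?_ ?_ (by linarith)
            · apply Real.logb_le_logb_of_le (by norm_num) (by positivity)
              have h8 : 0 ≤ 8 * a * b * (N : ℝ) / ε := by positivity
              push_cast
              linarith [Nat.cast_nonneg (α := ℝ) N]
            · apply Real.logb_nonneg (by norm_num)
              push_cast
              linarith [Nat.cast_nonneg (α := ℝ) N]
        _ ≤ 36 * a ^ 2 * b ^ 2 / ε ^ 2 * Real.logb 2 (8 * a * b * N / ε + 6 * N + 1) := by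
            have : (2 : ℝ) * T ≤ 36 * a ^ 2 * b ^ 2 / ε ^ 2 := by
              have h36 : 36 * a ^ 2 * b ^ 2 / ε ^ 2 = 36 * T := by rw [hT]; ring
              have hTnn : (0:ℝ) ≤ T := le_of_lt (lt_trans one_pos hT1)
              linarith
            exact mul_le_mul_of_nonneg_right this hlog_nonneg |>.trans_eq (by ring) |>.trans
              (le_of_eq rfl)
    · intro α hα
      have hα2 : (∑ j, α j ^ 2) ≤ a ^ 2 := by
        have hnn : 0 ≤ ∑ j, α j ^ 2 := sum_nonneg fun _ _ => sq_nonneg _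
        calc (∑ j, α j ^ 2) = Real.sqrt (∑ j, α j ^ 2) ^ 2 := (Real.sq_sqrt hnn).symm
          _ ≤ a ^ 2 := pow_le_pow_left₀ (Real.sqrt_nonneg _) hα 2
      have hbound : (∑ j, α j ^ 2) ≤ K * (ε ^ 2 / b ^ 2) := by
        have heq : a ^ 2 = T * (ε ^ 2 / b ^ 2) := by
          rw [hT]; field_simp
        have : T * (ε ^ 2 / b ^ 2) ≤ K * (ε ^ 2 / b ^ 2) :=
          mul_le_mul_of_nonneg_right hTK (by positivity)
        linarith
      obtain ⟨w, hwC, hw⟩ := hcov α hbound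
      refine ⟨fun i => ∑ j, X i j * w j, mem_image_of_mem _ hwC, ?_⟩
      intro i
      have : (∑ j, X i j * α j) - (∑ j, X i j * w j) = ∑ j, X i j * (α j - w j) := by
        rw [← Finset.sum_sub_distrib]
        exact Finset.sum_congr rfl fun j _ => by ring
      rw [this]
      exact hw i
end

section
/- Let g : ℝ → ℝ be a 1-Lipschitz function, let N ∈ ℕ, and let T be a nonempty bounded subset of ℝ^N. Then E_σ [ sup_{t ∈ T} ∑_{i=1}^N σ_i g(t_i) ] ≤ E_σ [ sup_{t ∈ T} ∑_{i=1}^N σ_i t_i ], where σ₁, …, σ_N are i.i.d. Rademacher random variables (taking values +1 and −1 with probability 1/2 each), and the expectation is over σ. -/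
open Finset

/-- Auxiliary: to bound a sum of two sups by a sum of two sups, it suffices to
bound each pair of values. -/
lemma talagrand_sup_pair {α : Type*} {T : Set α} (hT : T.Nonempty)
    {p q u v : α → ℝ}
    (hkey : ∀ t ∈ T, ∀ s ∈ T, p t + q s ≤ sSup (u '' T) + sSup (v '' T)) :
    sSup (p '' T) + sSup (q '' T) ≤ sSup (u '' T) + sSup (v '' T) := by
  have h1 : sSup (p '' T) ≤ (sSup (u '' T) + sSup (v '' T)) - sSup (q '' T) := by
    apply csSup_le (hT.image p)
    rintro x ⟨t, ht, rfl⟩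
    have h2 : sSup (q '' T) ≤ (sSup (u '' T) + sSup (v '' T)) - p t := by
      apply csSup_le (hT.image q)
      rintro y ⟨s, hs, rfl⟩
      linarith [hkey t ht s hs]
    linarith
  linarith

/-- Talagrand contraction lemma: for a 1-Lipschitz `g : ℝ → ℝ` and a nonempty
bounded set `T ⊆ ℝ^N`,
`E_σ sup_{t ∈ T} ∑ᵢ σᵢ g(tᵢ) ≤ E_σ sup_{t ∈ T} ∑ᵢ σᵢ tᵢ`,
where the expectation is the average over all sign vectors `σ ∈ {−1,+1}^N`. -/
theorem talagrand_contraction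
    (g : ℝ → ℝ) (hg : ∀ s t : ℝ, |g s - g t| ≤ |s - t|)
    (N : ℕ) (T : Set (Fin N → ℝ)) (hT : T.Nonempty) (hTb : Bornology.IsBounded T) :
    (1 / 2 ^ N : ℝ) * ∑ σ : Fin N → Bool,
        sSup ((fun t : Fin N → ℝ =>
          ∑ i, (if σ i then (1 : ℝ) else -1) * g (t i)) '' T) ≤
      (1 / 2 ^ N : ℝ) * ∑ σ : Fin N → Bool,
        sSup ((fun t : Fin N → ℝ =>
          ∑ i, (if σ i then (1 : ℝ) else -1) * t i) '' T) := by
  classical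
  obtain ⟨C, hC⟩ := hTb.exists_norm_le
  set R : ℝ := |C| + |g 0| with hRdef
  -- coordinatewise bounds
  have hbound : ∀ t ∈ T, ∀ i, |t i| ≤ R ∧ |g (t i)| ≤ R := by
    intro t ht i
    have h1 : ‖t i‖ ≤ ‖t‖ := norm_le_pi_norm t i
    have h2 : ‖t‖ ≤ C := hC t ht
    have h3 : |t i| ≤ |C| := by
      have : (C : ℝ) ≤ |C| := le_abs_self C
      simpa [Real.norm_eq_abs] using h1.trans (h2.trans this)
    constructor
    · have : (0:ℝ) ≤ |g 0| := abs_nonneg _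
      linarith
    · have h4 : |g (t i) - g 0| ≤ |t i - 0| := hg _ _
      have h5 : |g (t i)| ≤ |g (t i) - g 0| + |g 0| := by
        have := abs_add_le (g (t i) - g 0) (g 0)
        simpa using this
      simp only [sub_zero] at h4
      linarith
  -- sign of a boolean
  set sg : (Fin N → Bool) → Fin N → ℝ := fun σ i => if σ i then (1:ℝ) else -1 with hsg
  have hsgabs : ∀ σ i, |sg σ i| = 1 := by
    intro σ i; by_cases h : σ i <;> simp [hsg, h]
  -- the interpolated functionals
  set F : Finset (Fin N) → (Fin N → Bool) → ℝ := fun A σ =>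
    sSup ((fun t : Fin N → ℝ =>
      ∑ i, sg σ i * (if i ∈ A then t i else g (t i))) '' T) with hF
  have hBdd : ∀ (A : Finset (Fin N)) (σ : Fin N → Bool),
      BddAbove ((fun t : Fin N → ℝ =>
        ∑ i, sg σ i * (if i ∈ A then t i else g (t i))) '' T) := by
    intro A σ
    refine ⟨(N : ℝ) * R, ?_⟩
    rintro x ⟨t, ht, rfl⟩
    calc ∑ i, sg σ i * (if i ∈ A then t i else g (t i))
        ≤ ∑ _i : Fin N, R := by
          apply Finset.sum_le_sum
          intro i _
          have hb := hbound t ht i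
          have : |sg σ i * (if i ∈ A then t i else g (t i))| ≤ R := by
            rw [abs_mul, hsgabs, one_mul]
            by_cases h : i ∈ A <;> simp [h, hb.1, hb.2]
          exact (le_abs_self _).trans this
      _ = (N : ℝ) * R := by simp [mul_comm]
  -- the key single-coordinate step
  have step : ∀ (A : Finset (Fin N)) (j : Fin N), j ∉ A →
      ∑ σ : Fin N → Bool, F A σ ≤ ∑ σ : Fin N → Bool, F (insert j A) σ := by
    intro A j hj
    set flip : (Fin N → Bool) → (Fin N → Bool) :=
      fun σ => Function.update σ j (!σ j) with hflip
    have hinv : Function.Involutive flip := by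
      intro σ; funext i
      by_cases h : i = j
      · subst h; simp [hflip]
      · simp [hflip, Function.update_of_ne h]
    -- the part of the sum away from j
    set a : (Fin N → Bool) → (Fin N → ℝ) → ℝ := fun σ t =>
      ∑ i ∈ ({j}ᶜ : Finset (Fin N)), sg σ i * (if i ∈ A then t i else g (t i)) with ha
    have haflip : ∀ σ t, a (flip σ) t = a σ t := by
      intro σ t
      apply Finset.sum_congr rfl
      intro i hi
      have hij : i ≠ j := by simpa using hi
      simp [ha, hsg, hflip, Function.update_of_ne hij]
    have hsgflipj : ∀ σ, sg (flip σ) j = - sg σ j := by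
      intro σ
      by_cases h : σ j <;> simp [hsg, hflip, h]
    -- decompositions of the summands
    have hdecA : ∀ σ, (fun t : Fin N → ℝ =>
        ∑ i, sg σ i * (if i ∈ A then t i else g (t i)))
        = fun t => sg σ j * g (t j) + a σ t := by
      intro σ; funext t
      rw [Fintype.sum_eq_add_sum_compl j, if_neg hj]
    have hdecA' : ∀ σ, (fun t : Fin N → ℝ =>
        ∑ i, sg σ i * (if i ∈ insert j A then t i else g (t i)))
        = fun t => sg σ j * t j + a σ t := by
      intro σ; funext t
      rw [Fintype.sum_eq_add_sum_compl j, if_pos (Finset.mem_insert_self j A)]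
      congr 1
      apply Finset.sum_congr rfl
      intro i hi
      have hij : i ≠ j := by simpa using hi
      simp [Finset.mem_insert, hij]
    -- pairwise inequality
    have pair : ∀ σ, F A σ + F A (flip σ) ≤ F (insert j A) σ + F (insert j A) (flip σ) := by
      intro σ
      have hε : sg σ j = 1 ∨ sg σ j = -1 := by
        by_cases h : σ j <;> simp [hsg, h]
      set ε := sg σ j with hεdef
      have heqg : (fun t : Fin N → ℝ => sg (flip σ) j * g (t j) + a (flip σ) t)
          = fun t : Fin N → ℝ => -ε * g (t j) + a σ t := by
        funext t; rw [hsgflipj σ, haflip σ t]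
      have heqt : (fun t : Fin N → ℝ => sg (flip σ) j * t j + a (flip σ) t)
          = fun t : Fin N → ℝ => -ε * t j + a σ t := by
        funext t; rw [hsgflipj σ, haflip σ t]
      have hrw1 : F A σ = sSup ((fun t : Fin N → ℝ => ε * g (t j) + a σ t) '' T) := by
        simp only [hF]; rw [hdecA σ]
      have hrw2 : F A (flip σ) = sSup ((fun t : Fin N → ℝ => -ε * g (t j) + a σ t) '' T) := by
        simp only [hF]; rw [hdecA (flip σ), heqg]
      have hrw3 : F (insert j A) σ = sSup ((fun t : Fin N → ℝ => ε * t j + a σ t) '' T) := by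
        simp only [hF]; rw [hdecA' σ]
      have hrw4 : F (insert j A) (flip σ)
          = sSup ((fun t : Fin N → ℝ => -ε * t j + a σ t) '' T) := by
        simp only [hF]; rw [hdecA' (flip σ), heqt]
      have hBu : BddAbove ((fun t : Fin N → ℝ => ε * t j + a σ t) '' T) := by
        have := hBdd (insert j A) σ; rwa [hdecA' σ] at this
      have hBv : BddAbove ((fun t : Fin N → ℝ => -ε * t j + a σ t) '' T) := by
        have := hBdd (insert j A) (flip σ)
        rwa [hdecA' (flip σ), heqt] at this
      rw [hrw1, hrw2, hrw3, hrw4]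
      apply talagrand_sup_pair hT
      intro t ht s hs
      have hgl : |g (t j) - g (s j)| ≤ |t j - s j| := hg _ _
      have hεg : ε * g (t j) - ε * g (s j) ≤ |t j - s j| := by
        have h1 : ε * g (t j) - ε * g (s j) = ε * (g (t j) - g (s j)) := by ring
        have h2 : ε * (g (t j) - g (s j)) ≤ |g (t j) - g (s j)| := by
          rcases hε with h | h <;> rw [h]
          · rw [one_mul]; exact le_abs_self _
          · rw [neg_one_mul]; exact neg_le_abs _
        linarith
      rcases le_total (ε * s j) (ε * t j) with hc | hc
      · -- witnesses t for u, s for v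
        have hut : ε * t j + a σ t ≤ sSup ((fun t : Fin N → ℝ => ε * t j + a σ t) '' T) :=
          le_csSup hBu ⟨t, ht, rfl⟩
        have hvs : -ε * s j + a σ s ≤ sSup ((fun t : Fin N → ℝ => -ε * t j + a σ t) '' T) :=
          le_csSup hBv ⟨s, hs, rfl⟩
        have habs : |t j - s j| = ε * t j - ε * s j := by
          have h1 : ε * t j - ε * s j = ε * (t j - s j) := by ring
          have h2 : |ε * (t j - s j)| = |t j - s j| := by
            rcases hε with h | h <;> rw [h]
            · rw [one_mul]
            · rw [neg_one_mul, abs_neg]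
          rw [← h2, h1, abs_of_nonneg (by linarith)]
        linarith
      · -- witnesses s for u, t for v
        have hus : ε * s j + a σ s ≤ sSup ((fun t : Fin N → ℝ => ε * t j + a σ t) '' T) :=
          le_csSup hBu ⟨s, hs, rfl⟩
        have hvt : -ε * t j + a σ t ≤ sSup ((fun t : Fin N → ℝ => -ε * t j + a σ t) '' T) :=
          le_csSup hBv ⟨t, ht, rfl⟩
        have habs : |t j - s j| = ε * s j - ε * t j := by
          have h1 : ε * s j - ε * t j = -(ε * (t j - s j)) := by ring
          have h2 : |ε * (t j - s j)| = |t j - s j| := by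
            rcases hε with h | h <;> rw [h]
            · rw [one_mul]
            · rw [neg_one_mul, abs_neg]
          rw [← h2, h1, ← abs_neg (ε * (t j - s j)), abs_of_nonneg (by linarith)]
        linarith
    -- sum the pairwise inequality
    have hsumflipA : ∑ σ : Fin N → Bool, F A (flip σ) = ∑ σ : Fin N → Bool, F A σ :=
      Fintype.sum_equiv (hinv.toPerm flip) _ _ (fun σ => rfl)
    have hsumflipA' : ∑ σ : Fin N → Bool, F (insert j A) (flip σ)
        = ∑ σ : Fin N → Bool, F (insert j A) σ :=
      Fintype.sum_equiv (hinv.toPerm flip) _ _ (fun σ => rfl)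
    have hsum : ∑ σ : Fin N → Bool, (F A σ + F A (flip σ))
        ≤ ∑ σ : Fin N → Bool, (F (insert j A) σ + F (insert j A) (flip σ)) :=
      Finset.sum_le_sum fun σ _ => pair σ
    rw [Finset.sum_add_distrib, Finset.sum_add_distrib, hsumflipA, hsumflipA'] at hsum
    linarith
  -- induction over the set of identity coordinates
  have main : ∀ A : Finset (Fin N),
      ∑ σ : Fin N → Bool, F ∅ σ ≤ ∑ σ : Fin N → Bool, F A σ := by
    intro A
    induction A using Finset.induction_on with
    | empty => exact le_rfl
    | @insert j B hj ih => exact ih.trans (step B j hj)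
  have hmain := main Finset.univ
  have hL : ∀ σ : Fin N → Bool, F ∅ σ
      = sSup ((fun t : Fin N → ℝ => ∑ i, (if σ i then (1:ℝ) else -1) * g (t i)) '' T) := by
    intro σ; rw [hF]; simp [hsg]
  have hR : ∀ σ : Fin N → Bool, F Finset.univ σ
      = sSup ((fun t : Fin N → ℝ => ∑ i, (if σ i then (1:ℝ) else -1) * t i) '' T) := by
    intro σ; rw [hF]; simp [hsg]
  simp only [hL, hR] at hmain
  have hpos : (0:ℝ) ≤ 1 / 2 ^ N := by positivity
  exact mul_le_mul_of_nonneg_left hmain hpos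
end
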